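/- Let F̃ be an elliptic Minkowski integrand. Let ν, n₁, n₂ be unit vectors in ℝ^{n+1} such that ⟨∇F̃(ν), n₁⟩ ≤ 0 and ⟨∇F̃(ν), n₂⟩ ≤ 0. Let w be a unit vector with w = a·ν − b₁·n₁ − b₂·n₂ for some real numbers a ≥ 0, b₁ ≥ 0, b₂ ≥ 0. Then ⟨∇F̃(w), n₁⟩ ≤ 0 or ⟨∇F̃(w), n₂⟩ ≤ 0. -/

import Mathlib

open RealInnerProductSpace

noncomputable section

/-- Euclidean space ℝ^{n+1}. -/
abbrev Euc (n : ℕ) := EuclideanSpace ℝ (Fin (n + 1))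

/-- A Minkowski integrand: `F 0 = 0`, smooth away from the origin,
positively 1-homogeneous, and positive on nonzero vectors. -/
def MinkowskiIntegrand (n : ℕ) (F : Euc n → ℝ) : Prop :=
  F 0 = 0 ∧ ContDiffOn ℝ (⊤ : ℕ∞) F {0}ᶜ ∧
    (∀ s : ℝ, 0 < s → ∀ x : Euc n, F (s • x) = s * F x) ∧
    ∀ x : Euc n, x ≠ 0 → 0 < F x

/-- Ellipticity: the second Fréchet derivative at any unit vector is positive definite
on the orthogonal complement of that vector. -/
def Elliptic (n : ℕ) (F : Euc n → ℝ) : Prop :=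
  ∀ x v : Euc n, ‖x‖ = 1 → v ≠ 0 → ⟪x, v⟫ = 0 →
    0 < iteratedFDeriv ℝ 2 F x ![v, v]

/-- The dual function `F^o(y) = sup {⟨y, ξ⟩ / F(ξ) : ‖ξ‖ = 1}`. -/
def dualF (n : ℕ) (F : Euc n → ℝ) (y : Euc n) : ℝ :=
  sSup {r : ℝ | ∃ ξ : Euc n, ‖ξ‖ = 1 ∧ r = ⟪y, ξ⟫ / F ξ}

namespace Stmt14Aux

variable {n : ℕ} {F : Euc n → ℝ}

lemma inner_gradient (F : Euc n → ℝ) (x v : Euc n) :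
    ⟪gradient F x, v⟫ = fderiv ℝ F x v := by
  rw [gradient]; exact InnerProductSpace.toDual_symm_apply

lemma contDiffAt (hF : MinkowskiIntegrand n F) {x : Euc n} (hx : x ≠ 0) :
    ContDiffAt ℝ (⊤ : ℕ∞) F x :=
  hF.2.1.contDiffAt (isOpen_compl_singleton.mem_nhds hx)

lemma hasF (hF : MinkowskiIntegrand n F) {x : Euc n} (hx : x ≠ 0) :
    HasFDerivAt F (fderiv ℝ F x) x :=
  (((contDiffAt hF hx)).differentiableAt (by simp)).hasFDerivAt

lemma hasF2 (hF : MinkowskiIntegrand n F) {x : Euc n} (hx : x ≠ 0) :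
    HasFDerivAt (fderiv ℝ F) (fderiv ℝ (fderiv ℝ F) x) x := by
  have h : ContDiffAt ℝ (⊤ : ℕ∞) (fderiv ℝ F) x :=
    (contDiffAt hF hx).fderiv_right (m := (⊤ : ℕ∞)) (by simp)
  exact (h.differentiableAt (by simp)).hasFDerivAt

lemma euler (hF : MinkowskiIntegrand n F) {x : Euc n} (hx : x ≠ 0) :
    fderiv ℝ F x x = F x := by
  have hp : HasDerivAt (fun s : ℝ => s • x) x 1 := by
    simpa using (hasDerivAt_id (1 : ℝ)).smul_const x
  have h1 : HasDerivAt (fun s : ℝ => F (s • x)) (fderiv ℝ F x x) 1 := by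
    have hx1 : HasFDerivAt F (fderiv ℝ F x) ((1:ℝ) • x) := by
      rw [one_smul]; exact hasF hF hx
    have h := hx1.comp_hasDerivAt 1 hp
    exact h
  have h2 : HasDerivAt (fun s : ℝ => F (s • x)) (F x) 1 := by
    have heq : (fun s : ℝ => F (s • x)) =ᶠ[nhds (1 : ℝ)] fun s => s * F x := by
      filter_upwards [Ioi_mem_nhds (zero_lt_one)] with s hs
      exact hF.2.2.1 s hs x
    exact (by simpa using (hasDerivAt_id (1 : ℝ)).mul_const (F x) :
      HasDerivAt (fun s : ℝ => s * F x) (F x) 1).congr_of_eventuallyEq heq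
  exact h1.unique h2

lemma fderiv_homog (hF : MinkowskiIntegrand n F) {s : ℝ} (hs : 0 < s)
    {x : Euc n} (hx : x ≠ 0) : fderiv ℝ F (s • x) = fderiv ℝ F x := by
  have hsx : s • x ≠ 0 := smul_ne_zero hs.ne' hx
  have hA : HasFDerivAt (fun y : Euc n => s • y)
      (s • ContinuousLinearMap.id ℝ (Euc n)) x :=
    (hasFDerivAt_id x).const_smul s
  have h1 : HasFDerivAt (fun y : Euc n => F (s • y))
      (s • fderiv ℝ F (s • x)) x := by
    have h := (hasF hF hsx).comp x hA
    refine HasFDerivAt.congr_fderiv h ?_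
    ext v
    simp [smul_comm]
  have h2 : HasFDerivAt (fun y : Euc n => F (s • y)) (s • fderiv ℝ F x) x := by
    have heq : (fun y : Euc n => F (s • y)) = fun y => s • F y := by
      funext y; simpa using hF.2.2.1 s hs y
    rw [heq]
    exact (hasF hF hx).const_smul s
  have h := h1.unique h2
  exact smul_right_injective (Euc n →L[ℝ] ℝ) hs.ne' h

lemma snd_self (hF : MinkowskiIntegrand n F) {x : Euc n} (hx : x ≠ 0) :
    fderiv ℝ (fderiv ℝ F) x x = 0 := by
  have hp : HasDerivAt (fun s : ℝ => s • x) x 1 := by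
    simpa using (hasDerivAt_id (1 : ℝ)).smul_const x
  have h1 : HasDerivAt (fun s : ℝ => fderiv ℝ F (s • x))
      (fderiv ℝ (fderiv ℝ F) x x) 1 := by
    have hx1 : HasFDerivAt (fderiv ℝ F) (fderiv ℝ (fderiv ℝ F) x) ((1:ℝ) • x) := by
      rw [one_smul]; exact hasF2 hF hx
    have h := hx1.comp_hasDerivAt 1 hp
    exact h
  have h2 : HasDerivAt (fun s : ℝ => fderiv ℝ F (s • x)) 0 1 := by
    have heq : (fun s : ℝ => fderiv ℝ F (s • x)) =ᶠ[nhds (1 : ℝ)]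
        fun _ => fderiv ℝ F x := by
      filter_upwards [Ioi_mem_nhds (zero_lt_one)] with s hs
      exact fderiv_homog hF hs hx
    exact (hasDerivAt_const 1 (fderiv ℝ F x)).congr_of_eventuallyEq heq
  exact h1.unique h2

lemma snd_symm (hF : MinkowskiIntegrand n F) {x : Euc n} (hx : x ≠ 0)
    (u v : Euc n) :
    fderiv ℝ (fderiv ℝ F) x u v = fderiv ℝ (fderiv ℝ F) x v u := by
  have hev : ∀ᶠ y in nhds x, HasFDerivAt F (fderiv ℝ F y) y := by
    filter_upwards [isOpen_compl_singleton.mem_nhds hx] with y hy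
    exact hasF hF hy
  exact second_derivative_symmetric_of_eventually_of_real hev (hasF2 hF hx) u v

lemma snd_nonneg_unit (hF : MinkowskiIntegrand n F) (hell : Elliptic n F)
    {x : Euc n} (hx : ‖x‖ = 1) (v : Euc n) :
    0 ≤ fderiv ℝ (fderiv ℝ F) x v v := by
  have hx0 : x ≠ 0 := by intro h; rw [h] at hx; simp at hx
  set c : ℝ := ⟪x, v⟫ with hc
  set v' : Euc n := v - c • x with hv'
  have hxx : ⟪x, x⟫ = (1 : ℝ) := by
    rw [real_inner_self_eq_norm_sq, hx]; norm_num
  have horth : ⟪x, v'⟫ = 0 := by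
    rw [hv', inner_sub_right, real_inner_smul_right, hxx]; ring
  have hvv : v = v' + c • x := by rw [hv']; abel
  have hself : ∀ u : Euc n, fderiv ℝ (fderiv ℝ F) x x u = 0 := by
    intro u; rw [snd_self hF hx0]; rfl
  have hs1 : fderiv ℝ (fderiv ℝ F) x v' x = 0 := by
    rw [snd_symm hF hx0 v' x, hself]
  have hexp : fderiv ℝ (fderiv ℝ F) x v v = fderiv ℝ (fderiv ℝ F) x v' v' := by
    rw [hvv]
    simp only [map_add, map_smul, ContinuousLinearMap.add_apply,
      ContinuousLinearMap.smul_apply, ContinuousLinearMap.coe_smul',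
      Pi.smul_apply, hself, hs1, smul_eq_mul]
    ring
  rw [hexp]
  rcases eq_or_ne v' 0 with h0 | h0
  · simp [h0]
  · have h := hell x v' hx h0 horth
    rw [iteratedFDeriv_two_apply] at h
    simpa using h.le

lemma snd_nonneg (hF : MinkowskiIntegrand n F) (hell : Elliptic n F)
    {x : Euc n} (hx : x ≠ 0) (v : Euc n) :
    0 ≤ fderiv ℝ (fderiv ℝ F) x v v := by
  set s : ℝ := ‖x‖⁻¹ with hs
  have hxpos : (0 : ℝ) < ‖x‖ := norm_pos_iff.mpr hx
  have hspos : 0 < s := by positivity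
  set u : Euc n := s • x with hu
  have hunorm : ‖u‖ = 1 := by
    rw [hu, norm_smul, Real.norm_eq_abs, hs, abs_of_pos hspos]
    exact inv_mul_cancel₀ hxpos.ne'
  -- relate f'' x to f'' u
  have hkey : ∀ w : Euc n, fderiv ℝ (fderiv ℝ F) x w = s • fderiv ℝ (fderiv ℝ F) u w := by
    intro w
    have hA : HasFDerivAt (fun y : Euc n => s • y)
        (s • ContinuousLinearMap.id ℝ (Euc n)) x :=
      (hasFDerivAt_id x).const_smul s
    have hu0 : u ≠ 0 := by
      intro h; rw [h] at hunorm; simp at hunorm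
    have h1 : HasFDerivAt (fun y : Euc n => fderiv ℝ F (s • y))
        ((fderiv ℝ (fderiv ℝ F) u).comp (s • ContinuousLinearMap.id ℝ (Euc n))) x :=
      (hasF2 hF hu0).comp x hA
    have h2 : HasFDerivAt (fun y : Euc n => fderiv ℝ F (s • y))
        (fderiv ℝ (fderiv ℝ F) x) x := by
      have heq : (fun y : Euc n => fderiv ℝ F (s • y)) =ᶠ[nhds x] fderiv ℝ F := by
        filter_upwards [isOpen_compl_singleton.mem_nhds hx] with y hy
        exact fderiv_homog hF hspos hy
      exact (hasF2 hF hx).congr_of_eventuallyEq heq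
    have h := h2.unique h1
    rw [h]
    simp [smul_comm]
  have h := hkey v
  have h2 := snd_nonneg_unit hF hell hunorm v
  calc (0:ℝ) ≤ s * (fderiv ℝ (fderiv ℝ F) u v v) := by positivity
    _ = fderiv ℝ (fderiv ℝ F) x v v := by rw [h]; rfl

/-- Convexity inequality along a line avoiding the origin. -/
lemma grad_le (hF : MinkowskiIntegrand n F) (hell : Elliptic n F)
    {x y : Euc n} (hx : ‖x‖ = 1) (hy : ‖y‖ = 1) (hxy : y ≠ -x) :
    fderiv ℝ F x y ≤ F y := by
  set v : Euc n := y - x with hv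
  have hline : ∀ t : ℝ, x + t • v ≠ 0 := by
    intro t h
    have h' : t • y = (t - 1) • x := by
      have h0 : x + t • (y - x) = 0 := h
      linear_combination (norm := module) h0
    have hn : |t| = |t - 1| := by
      have := congrArg norm h'
      simpa [norm_smul, hx, hy] using this
    have ht : t = 1 / 2 := by
      rcases abs_eq_abs.mp hn with h1 | h1 <;> linarith
    rw [ht] at h'
    have : y = -x := by
      have h'' : (1/2 : ℝ) • y = -((1/2 : ℝ) • x) := by
        rw [h']; norm_num
      have := congrArg (fun z : Euc n => (2 : ℝ) • z) h''
      simpa [smul_smul, smul_neg] using this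
    exact hxy this
  set p : ℝ → Euc n := fun t => x + t • v with hpdef
  have hp : ∀ t : ℝ, HasDerivAt p v t := by
    intro t
    have := ((hasDerivAt_id t).smul_const v).const_add x
    rw [one_smul] at this; exact this
  have hg : ∀ t : ℝ, HasDerivAt (fun t => F (p t)) (fderiv ℝ F (p t) v) t :=
    fun t => (hasF hF (hline t)).comp_hasDerivAt t (hp t)
  have hg1 : ∀ t : ℝ, HasDerivAt (fun t => fderiv ℝ F (p t) v)
      (fderiv ℝ (fderiv ℝ F) (p t) v v) t := by
    intro t
    have h := (hasF2 hF (hline t)).comp_hasDerivAt t (hp t)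
    have h2 := h.clm_apply (hasDerivAt_const t v)
    simpa using h2
  have hmono : Monotone (fun t => fderiv ℝ F (p t) v) := by
    apply monotone_of_deriv_nonneg
    · exact fun t => (hg1 t).differentiableAt
    · intro t
      rw [(hg1 t).deriv]
      exact snd_nonneg hF hell (hline t) v
  obtain ⟨c, hc, hceq⟩ := exists_hasDerivAt_eq_slope (fun t => F (p t))
    (fun t => fderiv ℝ F (p t) v) zero_lt_one
    (fun t _ => ((hg t).continuousAt).continuousWithinAt)
    (fun t _ => hg t)
  have hp0 : p 0 = x := by simp [hpdef]
  have hp1 : p 1 = y := by simp [hpdef, hv]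
  rw [hp0, hp1] at hceq
  have h1 : fderiv ℝ F x v ≤ fderiv ℝ F (p c) v := by
    have := hmono (le_of_lt hc.1)
    simpa [hp0] using this
  have h2 : fderiv ℝ F x v = fderiv ℝ F x y - F x := by
    rw [hv, map_sub, euler hF (by intro h; rw [h] at hx; simp at hx)]
  rw [h2] at h1
  have : (F y - F x) / (1 - 0) = F y - F x := by norm_num
  rw [this] at hceq
  linarith [h1.trans_eq hceq]

end Stmt14Aux

open Stmt14Aux in
theorem statement_14 {n : ℕ} (hn : 2 ≤ n) (F : Euc n → ℝ)
    (hF : MinkowskiIntegrand n F) (hFell : Elliptic n F)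
    (ν n₁ n₂ : Euc n) (hν : ‖ν‖ = 1) (hn₁ : ‖n₁‖ = 1) (hn₂ : ‖n₂‖ = 1)
    (h₁ : ⟪gradient F ν, n₁⟫ ≤ 0) (h₂ : ⟪gradient F ν, n₂⟫ ≤ 0)
    (w : Euc n) (hw : ‖w‖ = 1)
    (hwab : ∃ a b₁ b₂ : ℝ, 0 ≤ a ∧ 0 ≤ b₁ ∧ 0 ≤ b₂ ∧
      w = a • ν - b₁ • n₁ - b₂ • n₂) :
    ⟪gradient F w, n₁⟫ ≤ 0 ∨ ⟪gradient F w, n₂⟫ ≤ 0 := by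
  obtain ⟨a, b₁, b₂, ha, hb₁, hb₂, hwe⟩ := hwab
  by_contra hcon
  push_neg at hcon
  obtain ⟨hc₁, hc₂⟩ := hcon
  rw [inner_gradient] at h₁ h₂ hc₁ hc₂
  have hν0 : ν ≠ 0 := by intro h; rw [h] at hν; simp at hν
  have hw0 : w ≠ 0 := by intro h; rw [h] at hw; simp at hw
  have hFν : 0 < F ν := hF.2.2.2 ν hν0
  have hFw : 0 < F w := hF.2.2.2 w hw0
  set c₁ : ℝ := fderiv ℝ F w n₁ with hC1
  set c₂ : ℝ := fderiv ℝ F w n₂ with hC2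
  set d₁ : ℝ := fderiv ℝ F ν n₁ with hD1
  set d₂ : ℝ := fderiv ℝ F ν n₂ with hD2
  by_cases hwv : w = -ν
  · -- then (a+1) • ν = b₁ • n₁ + b₂ • n₂
    have heq : (a + 1) • ν = b₁ • n₁ + b₂ • n₂ := by
      have := hwe
      rw [hwv] at this
      have h' := congrArg (fun z : Euc n => z + b₁ • n₁ + b₂ • n₂ + ν) this
      rw [add_smul, one_smul]
      abel_nf
      abel_nf at h'
      linear_combination (norm := module) h'.symm
    have happ := congrArg (fun z => fderiv ℝ F ν z) heq
    simp only [map_add, map_smul, smul_eq_mul] at happ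
    rw [euler hF hν0] at happ
    nlinarith [mul_nonpos_of_nonneg_of_nonpos hb₁ h₁,
      mul_nonpos_of_nonneg_of_nonpos hb₂ h₂]
  · have hvw : ν ≠ -w := by
      intro h
      apply hwv
      rw [h]; simp
    have key1 : fderiv ℝ F w ν ≤ F ν := grad_le hF hFell hw hν hvw
    have key2 : fderiv ℝ F ν w ≤ F w := grad_le hF hFell hν hw hwv
    have e1 : F w = a * fderiv ℝ F w ν - b₁ * c₁ - b₂ * c₂ := by
      have h0 := congrArg (fun z => fderiv ℝ F w z) hwe
      simp only [map_sub, map_smul, smul_eq_mul] at h0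
      rw [euler hF hw0] at h0
      rw [← hC1, ← hC2] at h0
      linarith [h0]
    have haν : a • ν = w + b₁ • n₁ + b₂ • n₂ := by
      rw [hwe]; abel
    have e2 : a * F ν = fderiv ℝ F ν w + b₁ * d₁ + b₂ * d₂ := by
      have := congrArg (fun z => fderiv ℝ F ν z) haν
      simp only [map_add, map_smul, smul_eq_mul] at this
      rw [euler hF hν0] at this
      linarith [this]
    by_cases hb : b₁ = 0 ∧ b₂ = 0
    · -- w = a • ν, so a = 1 and w = ν
      obtain ⟨hb1, hb2⟩ := hb
      rw [hb1, hb2] at hwe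
      simp only [zero_smul, sub_zero] at hwe
      have hna : ‖w‖ = a := by
        rw [hwe, norm_smul, Real.norm_eq_abs, abs_of_nonneg ha, hν, mul_one]
      rw [hw] at hna
      rw [← hna, one_smul] at hwe
      have hcd : c₁ = d₁ := by rw [hC1, hD1, hwe]
      rw [hcd] at hc₁
      linarith
    · have hbc : 0 < b₁ * c₁ + b₂ * c₂ := by
        rcases lt_or_eq_of_le hb₁ with h1 | h1
        · nlinarith
        · rcases lt_or_eq_of_le hb₂ with h2 | h2
          · nlinarith
          · exact absurd ⟨h1.symm, h2.symm⟩ hb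
      have step1 : F w < a * fderiv ℝ F w ν := by linarith
      have step2 : a * fderiv ℝ F w ν ≤ a * F ν :=
        mul_le_mul_of_nonneg_left key1 ha
      have u1 : b₁ * d₁ ≤ 0 := mul_nonpos_of_nonneg_of_nonpos hb₁ h₁
      have u2 : b₂ * d₂ ≤ 0 := mul_nonpos_of_nonneg_of_nonpos hb₂ h₂
      have step3 : a * F ν ≤ fderiv ℝ F ν w := by linarith
      linarith
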